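/- Fix r, q, σ, T with σ > 0, T > 0, fix x* > 0, h ∈ ℝ, and θ ∈ (0,1). Define α^g(t,u,x) = (t/u)·ln x − ((u² − t²)/(2u))·(r − q + σ²/2) and β^g(t,u) = (σ/(u·√3))·√(u³ − t³) for 0 ≤ t ≤ u. Then lim_{τ→0⁺} [ln(x*·(1 + hσ·√(τ(1−θ)))) − α^g(T−τ, T−τ(1−θ), x*·(1 + hσ·√τ))] / β^g(T−τ, T−τ(1−θ)) = −h·(1 − √(1−θ))/√θ. -/

import Mathlib

open Real Filter Topology

/-- `α^g(t,u,x) = (t/u)·ln x − ((u²−t²)/(2u))·(r−q+σ²/2)`. -/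
noncomputable def alphaG (r q σ t u x : ℝ) : ℝ :=
  (t / u) * Real.log x - ((u ^ 2 - t ^ 2) / (2 * u)) * (r - q + σ ^ 2 / 2)

/-- `β^g(t,u) = (σ/(u√3))·√(u³−t³)`. -/
noncomputable def betaG (σ t u : ℝ) : ℝ :=
  (σ / (u * Real.sqrt 3)) * Real.sqrt (u ^ 3 - t ^ 3)

/-!
With `t = T - τ` and `u = T - τ(1-θ)` we have `u - t = θτ`, so `β^g(t,u)` is `σ√θ·√τ` to leading
order. The numerator is `ln x - ln y` plus `(u - t)/u` times a bounded term, so after division by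
`√(u - t)` only `(ln x - ln y)/√(θτ)` survives; as `ln x - ln y = ln(1 + hσ√(1-θ)·√τ) - ln(1 + hσ√τ)`,
this is a difference quotient in `√τ` with limit `hσ(√(1-θ) - 1)/√θ`.
-/

lemma tendsto_sqrt_nhdsGT_zero : Tendsto sqrt (𝓝[>] 0) (𝓝[>] 0) :=
  tendsto_nhdsWithin_of_tendsto_nhds_of_eventually_within _
    ((continuous_sqrt.tendsto' 0 0 sqrt_zero).mono_left nhdsWithin_le_nhds)
    (eventually_nhdsWithin_of_forall fun _ ↦ sqrt_pos.mpr)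

lemma HasDerivAt.tendsto_comp_sqrt_div_sqrt {f : ℝ → ℝ} {f' : ℝ} (hf : HasDerivAt f f' 0)
    (h0 : f 0 = 0) : Tendsto (fun τ ↦ f √τ / √τ) (𝓝[>] 0) (𝓝 f') := by
  simpa [h0, div_eq_inv_mul, Function.comp_def] using
    hf.tendsto_slope_zero_right.comp tendsto_sqrt_nhdsGT_zero

lemma hasDerivAt_log_mul_one_add_mul {x : ℝ} (hx : x ≠ 0) (a : ℝ) :
    HasDerivAt (fun s ↦ log (x * (1 + a * s))) a 0 := by
  simpa [hx] using
    ((((hasDerivAt_id (0 : ℝ)).const_mul a).const_add 1).const_mul x).log (by simpa using hx)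

lemma log_sub_alphaG {u : ℝ} (hu : u ≠ 0) (r q σ t x y : ℝ) :
    log x - alphaG r q σ t u y
      = log x - log y + (u - t) / u * (log y + (u + t) / 2 * (r - q + σ ^ 2 / 2)) := by
  unfold alphaG
  field_simp
  ring

lemma betaG_eq_of_le {t u : ℝ} (htu : t ≤ u) (σ : ℝ) :
    betaG σ t u = σ / (u * √3) * √(u ^ 2 + u * t + t ^ 2) * √(u - t) := by
  rw [betaG, show u ^ 3 - t ^ 3 = (u - t) * (u ^ 2 + u * t + t ^ 2) by ring,
    sqrt_mul (sub_nonneg.mpr htu)]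
  ring

lemma log_sub_alphaG_div_betaG_eq {t u : ℝ} (hu : u ≠ 0) (htu : t < u) (r q σ x y : ℝ) :
    (log x - alphaG r q σ t u y) / betaG σ t u
      = ((log x - log y) / √(u - t)
          + √(u - t) * ((log y + (u + t) / 2 * (r - q + σ ^ 2 / 2)) / u))
        / (σ / (u * √3) * √(u ^ 2 + u * t + t ^ 2)) := by
  rw [log_sub_alphaG hu, betaG_eq_of_le htu.le, mul_comm, ← div_div, add_div]
  obtain ⟨s, hs, hst⟩ : ∃ s, 0 < s ∧ u - t = s ^ 2 :=
    ⟨√(u - t), sqrt_pos.mpr (sub_pos.mpr htu), (sq_sqrt (sub_pos.mpr htu).le).symm⟩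
  rw [hst, sqrt_sq hs.le]
  field_simp

/-- For `x* > 0`, `h ∈ ℝ`, `θ ∈ (0,1)`,
`lim_{τ→0⁺} [ln(x*(1+hσ√(τ(1−θ)))) − α^g(T−τ, T−τ(1−θ), x*(1+hσ√τ))] / β^g(T−τ, T−τ(1−θ))
  = −h(1−√(1−θ))/√θ`. -/
theorem tendsto_log_sub_alphaG_div_betaG (r q σ T xs h θ : ℝ) (hσ : 0 < σ) (hT : 0 < T)
    (hxs : 0 < xs) (hθ : θ ∈ Set.Ioo (0:ℝ) 1) :
    Tendsto (fun τ : ℝ =>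
        (Real.log (xs * (1 + h * σ * Real.sqrt (τ * (1 - θ))))
            - alphaG r q σ (T - τ) (T - τ * (1 - θ)) (xs * (1 + h * σ * Real.sqrt τ)))
          / betaG σ (T - τ) (T - τ * (1 - θ)))
      (𝓝[>] 0) (𝓝 (-h * (1 - Real.sqrt (1 - θ)) / Real.sqrt θ)) := by
  obtain ⟨hθ0, hθ1⟩ := hθ
  have hlog : Tendsto (fun τ ↦ (log (xs * (1 + h * σ * √(1 - θ) * √τ))
      - log (xs * (1 + h * σ * √τ))) / (√τ * √θ)) (𝓝[>] 0)
      (𝓝 ((h * σ * √(1 - θ) - h * σ) / √θ)) := by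
    simpa only [Pi.sub_apply, div_div] using
      (((hasDerivAt_log_mul_one_add_mul hxs.ne' _).sub
        (hasDerivAt_log_mul_one_add_mul hxs.ne' _)).tendsto_comp_sqrt_div_sqrt
        (by simp)).div_const √θ
  have hdrift : Tendsto (fun τ ↦ √τ * √θ * ((log (xs * (1 + h * σ * √τ))
      + (T - τ * (1 - θ) + (T - τ)) / 2 * (r - q + σ ^ 2 / 2)) / (T - τ * (1 - θ))))
      (𝓝[>] 0) (𝓝 0) := by
    refine tendsto_nhdsWithin_of_tendsto_nhds ?_
    convert ContinuousAt.tendsto ?_ using 2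
    · simp
    · fun_prop (disch := simp [hxs.ne', hT.ne'])
  have hvol : Tendsto (fun τ ↦ σ / ((T - τ * (1 - θ)) * √3) *
      √((T - τ * (1 - θ)) ^ 2 + (T - τ * (1 - θ)) * (T - τ) + (T - τ) ^ 2)) (𝓝[>] 0) (𝓝 σ) := by
    refine tendsto_nhdsWithin_of_tendsto_nhds ?_
    convert ContinuousAt.tendsto ?_ using 2
    · simp only [zero_mul, sub_zero]
      rw [show T ^ 2 + T * T + T ^ 2 = 3 * T ^ 2 by ring, sqrt_mul zero_le_three, sqrt_sq hT.le]
      field_simp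
    · fun_prop (disch := simp [hT.ne'])
  rw [show -h * (1 - √(1 - θ)) / √θ = ((h * σ * √(1 - θ) - h * σ) / √θ + 0) / σ by
    field_simp; ring]
  refine Tendsto.congr' ?_ ((hlog.add hdrift).div hvol hσ.ne')
  filter_upwards [Ioo_mem_nhdsGT hT] with τ ⟨hτ0, hτT⟩
  have hu : 0 < T - τ * (1 - θ) := by nlinarith
  rw [log_sub_alphaG_div_betaG_eq hu.ne' (by nlinarith),
    show T - τ * (1 - θ) - (T - τ) = τ * θ by ring, sqrt_mul hτ0.le, sqrt_mul hτ0.le,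
    mul_comm √τ, ← mul_assoc]
  rfl
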